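/- arXiv:2406.04016 — 2 statements merged into one kernel-verified Lean document; each statement's English description precedes it below -/
import Mathlib

section
/- Let μ_0, μ_1 be Borel probability measures on (0,∞) with ∫ (x + 1/x) dμ_i(x) < ∞ for i = 0,1, satisfying μ_0 ≼_cx μ_1, and set ν_i = Id_†μ_i. Then the sets A := {z ∈ ℝ : U_{ν_0}(z) < U_{ν_1}(z)} and B := {z ∈ ℝ : U_{μ_0}(z) < U_{μ_1}(z)} are both contained in (0,∞), and a subset I ⊆ ℝ is a connected component of A if and only if its image {1/x : x ∈ I} under the map x ↦ 1/x is a connected component of B. -/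
open MeasureTheory Set

/-- The reflected measure `Id_† μ`: the pushforward under `x ↦ 1/x` of the measure
with density `x / m` with respect to `μ`, where `m = ∫ x ∂μ` is the mean of `μ`. -/
noncomputable def reflect (μ : Measure ℝ) : Measure ℝ :=
  Measure.map (fun x => x⁻¹) (μ.withDensity (fun x => ENNReal.ofReal (x / ∫ y, y ∂μ)))

/-- The potential function of a measure `ρ` on `ℝ`: `U_ρ(z) = ∫ |x - z| dρ(x)`. -/
noncomputable def potential (ρ : Measure ℝ) (z : ℝ) : ℝ := ∫ x, |x - z| ∂ρ

/-- Convex order: `η ≼_cx ρ` iff `∫ f dη ≤ ∫ f dρ` (with integrals valued in `[0,∞]`)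
for every convex function `f : ℝ → [0,∞)`. -/
def ConvexOrder (η ρ : Measure ℝ) : Prop :=
  ∀ f : ℝ → ℝ, ConvexOn ℝ Set.univ f → (∀ x, 0 ≤ f x) →
    ∫⁻ x, ENNReal.ofReal (f x) ∂η ≤ ∫⁻ x, ENNReal.ofReal (f x) ∂ρ

/-- `I` is a connected component of `A` (in the subspace sense). -/
def IsConnComp (I A : Set ℝ) : Prop := ∃ x ∈ A, I = connectedComponentIn A x

open Filter Topology

/-!
Testing the convex order against `x ↦ |x - z|` orders the potentials, `U_{μ₀} ≤ U_{μ₁}`.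
As the `μᵢ` live on `(0,∞)`, `U_{μᵢ}(z) = mᵢ - z` for `z ≤ 0`, while `U_{μᵢ}(z) - (z - mᵢ) → 0`
as `z → ∞`; together these force equal means `m₀ = m₁ = m`. Then on `(-∞, 0]` the potentials
`U_{μᵢ}(z) = m - z` and `U_{νᵢ}(z) = 1/m - z` agree, so `A, B ⊆ (0,∞)`. For `z > 0` the change of
variables `x ↦ 1/x` gives `U_{νᵢ}(z) = z U_{μᵢ}(1/z) / m`, so `A` is the image of `B` under the
involution `x ↦ 1/x`, a homeomorphism of `(0,∞)`, which therefore matches their components.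
-/

lemma Function.Involutive.image_connectedComponentIn {X : Type*} [TopologicalSpace X]
    {f : X → X} (hf : f.Involutive) {s : Set X}
    (hs : ContinuousOn f s) (hfs : ContinuousOn f (f '' s)) {x : X} (hx : x ∈ s) :
    f '' connectedComponentIn s x = connectedComponentIn (f '' s) (f x) := by
  have himage : ∀ t : Set X, f '' (f '' t) = t := fun t => by
    rw [image_image]; simp only [hf _, image_id']
  refine (hs.image_connectedComponentIn_subset hx).antisymm ?_
  have h := hfs.image_connectedComponentIn_subset (mem_image_of_mem f hx)
  rw [himage, hf x] at h
  simpa only [himage] using image_mono (f := f) h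

lemma Function.Involutive.isConnComp_image_iff {f : ℝ → ℝ} (hf : f.Involutive) {A : Set ℝ}
    (hA : ContinuousOn f A) (hfA : ContinuousOn f (f '' A)) (I : Set ℝ) :
    IsConnComp I A ↔ IsConnComp (f '' I) (f '' A) := by
  constructor
  · rintro ⟨x, hx, rfl⟩
    exact ⟨f x, mem_image_of_mem f hx, hf.image_connectedComponentIn hA hfA hx⟩
  · rintro ⟨_, ⟨x, hx, rfl⟩, hI⟩
    rw [← hf.image_connectedComponentIn hA hfA hx] at hI
    exact ⟨x, hx, hf.injective.image_injective hI⟩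

lemma isConnComp_inv_image_iff {A : Set ℝ} (hA : 0 ∉ A) (I : Set ℝ) :
    IsConnComp I A ↔ IsConnComp (Inv.inv '' I) (Inv.inv '' A) := by
  have hA' : A ⊆ {0}ᶜ := fun x hx h => hA (h ▸ hx)
  have hinvA : Inv.inv '' A ⊆ {0}ᶜ := by
    rintro _ ⟨x, hx, rfl⟩
    exact inv_ne_zero (hA' hx)
  exact inv_involutive.isConnComp_image_iff (continuousOn_inv₀.mono hA')
    (continuousOn_inv₀.mono hinvA) I

section Potential

variable {μ : Measure ℝ}

lemma integrable_id_of_integrable_add_inv (hpos : ∀ᵐ x ∂μ, 0 < x)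
    (h : Integrable (fun x => x + x⁻¹) μ) : Integrable (fun x : ℝ => x) μ := by
  refine h.mono aestronglyMeasurable_id ?_
  filter_upwards [hpos] with x hx
  have hx' : 0 < x⁻¹ := inv_pos.2 hx
  rw [Real.norm_of_nonneg hx.le, Real.norm_of_nonneg (by positivity)]
  linarith

lemma integral_id_pos [NeZero μ] (hpos : ∀ᵐ x ∂μ, 0 < x) (hμ : Integrable (fun x : ℝ => x) μ) :
    0 < ∫ x, x ∂μ := by
  have hnonneg : 0 ≤ᵐ[μ] fun x : ℝ => x := hpos.mono fun _ hx => hx.le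
  refine (integral_nonneg_of_ae hnonneg).lt_of_ne fun h => ?_
  obtain ⟨x, hx, hx0⟩ :=
    (hpos.and ((integral_eq_zero_iff_of_nonneg_ae hnonneg hμ).1 h.symm)).exists
  exact hx.ne' hx0

lemma integrable_abs_sub [IsFiniteMeasure μ] (hμ : Integrable (fun x : ℝ => x) μ) (z : ℝ) :
    Integrable (fun x => |x - z|) μ :=
  (hμ.sub (integrable_const z)).abs

lemma potential_of_nonpos [IsProbabilityMeasure μ] (hpos : ∀ᵐ x ∂μ, 0 < x)
    (hμ : Integrable (fun x : ℝ => x) μ) {z : ℝ} (hz : z ≤ 0) :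
    potential μ z = (∫ x, x ∂μ) - z := by
  rw [potential, integral_congr_ae (g := fun x => x - z), integral_sub hμ (integrable_const z),
    integral_const, probReal_univ, one_smul]
  filter_upwards [hpos] with x hx
  exact abs_of_nonneg (by linarith)

lemma tendsto_potential_sub_atTop [IsProbabilityMeasure μ] (hμ : Integrable (fun x : ℝ => x) μ) :
    Tendsto (fun z => potential μ z - (z - ∫ x, x ∂μ)) atTop (𝓝 0) := by
  have hsub : ∀ z, potential μ z - (z - ∫ x, x ∂μ) = ∫ x, (|x - z| - (z - x)) ∂μ := fun z => by
    have hz : Integrable (fun x => z - x) μ := (integrable_const z).sub hμ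
    rw [potential, integral_sub (integrable_abs_sub hμ z) hz,
      integral_sub (integrable_const z) hμ, integral_const, probReal_univ, one_smul]
  simp_rw [hsub]
  rw [← integral_zero ℝ ℝ]
  refine tendsto_integral_filter_of_dominated_convergence (fun x => 2 * |x|)
    (Eventually.of_forall fun z => by fun_prop) ?_ (hμ.abs.const_mul 2) ?_
  · filter_upwards [eventually_ge_atTop 0] with z hz
    refine Eventually.of_forall fun x => ?_
    rw [Real.norm_eq_abs, abs_le]
    rcases abs_cases (x - z) with ⟨h₁, h₂⟩ | ⟨h₁, h₂⟩ <;>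
      rcases abs_cases x with ⟨h₃, h₄⟩ | ⟨h₃, h₄⟩ <;> constructor <;> linarith
  · refine Eventually.of_forall fun x => tendsto_const_nhds.congr' ?_
    filter_upwards [eventually_ge_atTop x] with z hz
    rw [abs_of_nonpos (by linarith)]
    ring

end Potential

section ConvexOrder

variable {μ₀ μ₁ : Measure ℝ}

lemma ConvexOrder.integral_le (hcx : ConvexOrder μ₀ μ₁) {f : ℝ → ℝ}
    (hconv : ConvexOn ℝ univ f) (hnonneg : ∀ x, 0 ≤ f x)
    (h₀ : Integrable f μ₀) (h₁ : Integrable f μ₁) :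
    ∫ x, f x ∂μ₀ ≤ ∫ x, f x ∂μ₁ := by
  have h := hcx f hconv hnonneg
  rw [← ofReal_integral_eq_lintegral_ofReal h₀ (Eventually.of_forall hnonneg),
    ← ofReal_integral_eq_lintegral_ofReal h₁ (Eventually.of_forall hnonneg)] at h
  exact (ENNReal.ofReal_le_ofReal_iff (integral_nonneg hnonneg)).1 h

lemma ConvexOrder.potential_le [IsFiniteMeasure μ₀] [IsFiniteMeasure μ₁]
    (hcx : ConvexOrder μ₀ μ₁) (h₀ : Integrable (fun x : ℝ => x) μ₀)
    (h₁ : Integrable (fun x : ℝ => x) μ₁) (z : ℝ) :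
    potential μ₀ z ≤ potential μ₁ z :=
  hcx.integral_le (by simpa only [Real.dist_eq] using convexOn_univ_dist z)
    (fun _ => abs_nonneg _) (integrable_abs_sub h₀ z) (integrable_abs_sub h₁ z)

lemma ConvexOrder.integral_id_eq [IsProbabilityMeasure μ₀] [IsProbabilityMeasure μ₁]
    (hcx : ConvexOrder μ₀ μ₁) (hpos₀ : ∀ᵐ x ∂μ₀, 0 < x) (hpos₁ : ∀ᵐ x ∂μ₁, 0 < x)
    (h₀ : Integrable (fun x : ℝ => x) μ₀) (h₁ : Integrable (fun x : ℝ => x) μ₁) :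
    ∫ x, x ∂μ₀ = ∫ x, x ∂μ₁ := by
  have hle : ∫ x, x ∂μ₀ ≤ ∫ x, x ∂μ₁ := by
    simpa only [potential_of_nonpos hpos₀ h₀ le_rfl, potential_of_nonpos hpos₁ h₁ le_rfl,
      sub_zero] using hcx.potential_le h₀ h₁ 0
  have hge : ∫ x, x ∂μ₁ - ∫ x, x ∂μ₀ ≤ 0 := by
    have hlim := (tendsto_potential_sub_atTop h₁).sub (tendsto_potential_sub_atTop h₀)
    rw [sub_zero] at hlim
    refine ge_of_tendsto hlim (Eventually.of_forall fun z => ?_)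
    linarith [hcx.potential_le h₀ h₁ z]
  linarith

end ConvexOrder

section Reflect

variable {μ : Measure ℝ}

lemma potential_reflect (hpos : ∀ᵐ x ∂μ, 0 < x) (z : ℝ) :
    potential (reflect μ) z = (∫ x, |1 - z * x| ∂μ) / ∫ x, x ∂μ := by
  have hm : 0 ≤ ∫ x, x ∂μ := integral_nonneg_of_ae (hpos.mono fun _ hx => hx.le)
  rw [potential, reflect, integral_map (by fun_prop) (by fun_prop),
    integral_withDensity_eq_integral_toReal_smul (by fun_prop)
      (Eventually.of_forall fun _ => ENNReal.ofReal_lt_top), ← integral_div]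
  refine integral_congr_ae ?_
  filter_upwards [hpos] with x hx
  rw [ENNReal.toReal_ofReal (div_nonneg hx.le hm), smul_eq_mul,
    show 1 - z * x = x * (x⁻¹ - z) by rw [mul_sub, mul_inv_cancel₀ hx.ne', mul_comm],
    abs_mul, abs_of_pos hx]
  ring

lemma potential_reflect_of_nonpos [IsProbabilityMeasure μ] (hpos : ∀ᵐ x ∂μ, 0 < x)
    (hμ : Integrable (fun x : ℝ => x) μ) {z : ℝ} (hz : z ≤ 0) :
    potential (reflect μ) z = (∫ x, x ∂μ)⁻¹ - z := by
  have hm := integral_id_pos hpos hμ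
  rw [potential_reflect hpos, integral_congr_ae (g := fun x => 1 - z * x),
    integral_sub (integrable_const 1) (hμ.const_mul z), integral_const, integral_const_mul,
    probReal_univ, one_smul]
  · field_simp
  filter_upwards [hpos] with x hx
  exact abs_of_nonneg (by nlinarith)

lemma potential_reflect_of_pos (hpos : ∀ᵐ x ∂μ, 0 < x) {z : ℝ} (hz : 0 < z) :
    potential (reflect μ) z = z * potential μ z⁻¹ / ∫ x, x ∂μ := by
  rw [potential_reflect hpos, potential, ← integral_const_mul]
  congr 1
  refine integral_congr_ae (Eventually.of_forall fun x => show |1 - z * x| = z * |x - z⁻¹| from ?_)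
  rw [show 1 - z * x = z * (z⁻¹ - x) by rw [mul_sub, mul_inv_cancel₀ hz.ne'], abs_mul,
    abs_of_pos hz, abs_sub_comm]

lemma potential_reflect_lt_iff_of_pos {μ₀ μ₁ : Measure ℝ} (hpos₀ : ∀ᵐ x ∂μ₀, 0 < x)
    (hpos₁ : ∀ᵐ x ∂μ₁, 0 < x) (hm : ∫ x, x ∂μ₀ = ∫ x, x ∂μ₁) (hm₀ : 0 < ∫ x, x ∂μ₀)
    {z : ℝ} (hz : 0 < z) :
    potential (reflect μ₀) z < potential (reflect μ₁) z ↔ potential μ₀ z⁻¹ < potential μ₁ z⁻¹ := by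
  rw [potential_reflect_of_pos hpos₀ hz, potential_reflect_of_pos hpos₁ hz, ← hm]
  exact (div_lt_div_iff_of_pos_right hm₀).trans (mul_lt_mul_iff_right₀ hz)

end Reflect

/-- For Borel probability measures `μ₀, μ₁` on `(0,∞)` with `∫ (x + 1/x) dμᵢ < ∞` and
`μ₀ ≼_cx μ₁`, setting `νᵢ = Id_† μᵢ`, the sets `A = {U_{ν₀} < U_{ν₁}}` and
`B = {U_{μ₀} < U_{μ₁}}` are contained in `(0,∞)`, and `I` is a connected component of
`A` iff `{1/x : x ∈ I}` is a connected component of `B`. -/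
theorem stmt5 (μ₀ μ₁ : Measure ℝ) [IsProbabilityMeasure μ₀] [IsProbabilityMeasure μ₁]
    (hsupp₀ : μ₀ (Set.Ioi (0:ℝ))ᶜ = 0) (hsupp₁ : μ₁ (Set.Ioi (0:ℝ))ᶜ = 0)
    (hint₀ : Integrable (fun x => x + x⁻¹) μ₀)
    (hint₁ : Integrable (fun x => x + x⁻¹) μ₁)
    (hcx : ConvexOrder μ₀ μ₁) :
    {z : ℝ | potential (reflect μ₀) z < potential (reflect μ₁) z} ⊆ Set.Ioi (0:ℝ) ∧
    {z : ℝ | potential μ₀ z < potential μ₁ z} ⊆ Set.Ioi (0:ℝ) ∧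
    (∀ I : Set ℝ,
      IsConnComp I {z : ℝ | potential (reflect μ₀) z < potential (reflect μ₁) z}
        ↔ IsConnComp ((fun x => 1 / x) '' I)
            {z : ℝ | potential μ₀ z < potential μ₁ z}) := by
  have hpos₀ : ∀ᵐ x ∂μ₀, 0 < x := mem_ae_iff.2 hsupp₀
  have hpos₁ : ∀ᵐ x ∂μ₁, 0 < x := mem_ae_iff.2 hsupp₁
  have hid₀ := integrable_id_of_integrable_add_inv hpos₀ hint₀
  have hid₁ := integrable_id_of_integrable_add_inv hpos₁ hint₁
  have hm := hcx.integral_id_eq hpos₀ hpos₁ hid₀ hid₁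
  have hm₀ := integral_id_pos hpos₀ hid₀
  have hA (z : ℝ) (hz : potential (reflect μ₀) z < potential (reflect μ₁) z) : 0 < z :=
    not_le.1 fun hz0 => hz.ne <| by
      rw [potential_reflect_of_nonpos hpos₀ hid₀ hz0, potential_reflect_of_nonpos hpos₁ hid₁ hz0,
        hm]
  have hB (z : ℝ) (hz : potential μ₀ z < potential μ₁ z) : 0 < z :=
    not_le.1 fun hz0 => hz.ne <| by
      rw [potential_of_nonpos hpos₀ hid₀ hz0, potential_of_nonpos hpos₁ hid₁ hz0, hm]
  have hBA : {z | potential μ₀ z < potential μ₁ z} =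
      Inv.inv '' {z | potential (reflect μ₀) z < potential (reflect μ₁) z} := by
    ext z
    refine ⟨fun hz => ⟨z⁻¹, ?_, inv_inv z⟩, ?_⟩
    · rwa [mem_ofPred_eq, potential_reflect_lt_iff_of_pos hpos₀ hpos₁ hm hm₀ (inv_pos.2 (hB z hz)),
        inv_inv]
    · rintro ⟨x, hx, rfl⟩
      exact (potential_reflect_lt_iff_of_pos hpos₀ hpos₁ hm hm₀ (hA x hx)).1 hx
  refine ⟨hA, hB, fun I => ?_⟩
  rw [show (fun x : ℝ => 1 / x) = Inv.inv from funext one_div, hBA]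
  exact isConnComp_inv_image_iff (fun h => lt_irrefl 0 (hA 0 h)) I
end

section
/- Let μ_0, μ_1 be Borel probability measures on (0,∞) with ∫ (x + 1/x) dμ_i(x) < ∞ for i = 0,1, satisfying μ_0 ≼_cx μ_1, with common mean m = ∫ x dμ_0(x) = ∫ x dμ_1(x), and set ν_i = Id_‡μ_i. Then a subset I ⊆ ℝ is a connected component of {z ∈ ℝ : U_{ν_0}(z) < U_{ν_1}(z)} if and only if the set {m/x : x ∈ I} is a connected component of {z ∈ ℝ : U_{μ_0}(z) < U_{μ_1}(z)}. -/
/-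
For `z ≠ 0` the change of variables defining `Id_‡` gives
`U_{Id_‡ μ}(z) = |z| / m · U_μ(m / z)`, while at `z = 0` we have `U_{Id_‡ μ}(0) = 1` and
`U_μ(0) = m` for every probability measure `μ` on `(0,∞)` of mean `m`. So `z ↦ m / z`
(an involution of `ℝ`, since `m / 0 = 0`) maps `{U_{ν₀} < U_{ν₁}}` onto `{U_{μ₀} < U_{μ₁}}`.
Neither set contains `0`, and away from `0` the involution is continuous, so it carries
connected components to connected components.
-/

open MeasureTheory Set

/-- The normalised reflected measure `Id_‡ μ := Id_† μ̃`, where `μ̃` is the pushforward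
of `μ` under `x ↦ x/m` and `m = ∫ x ∂μ`. -/
noncomputable def reflectNorm (μ : Measure ℝ) : Measure ℝ :=
  reflect (Measure.map (fun x => x / ∫ y, y ∂μ) μ)

theorem Equiv.image_connectedComponentIn_of_continuousOn {X Y : Type*} [TopologicalSpace X]
    [TopologicalSpace Y] (e : X ≃ Y) {s : Set X} (he : ContinuousOn e s)
    (he_symm : ContinuousOn e.symm (e '' s)) {x : X} (hx : x ∈ s) :
    e '' connectedComponentIn s x = connectedComponentIn (e '' s) (e x) := by
  refine (he.image_connectedComponentIn_subset hx).antisymm ?_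
  have := he_symm.image_connectedComponentIn_subset (mem_image_of_mem e hx)
  rwa [e.symm_image_image, e.symm_apply_apply, ← e.image_subset, e.image_symm_image] at this

theorem isConnComp_image_iff (e : ℝ ≃ ℝ) {s : Set ℝ} (he : ContinuousOn e s)
    (he_symm : ContinuousOn e.symm (e '' s)) (I : Set ℝ) :
    IsConnComp I s ↔ IsConnComp (e '' I) (e '' s) := by
  constructor
  · rintro ⟨x, hx, rfl⟩
    exact ⟨e x, mem_image_of_mem e hx,
      e.image_connectedComponentIn_of_continuousOn he he_symm hx⟩
  · rintro ⟨y, ⟨x, hx, rfl⟩, hI⟩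
    refine ⟨x, hx, e.injective.image_injective ?_⟩
    rw [hI, e.image_connectedComponentIn_of_continuousOn he he_symm hx]

section Potential

variable {μ : Measure ℝ}

theorem integral_reflect (hμ : ∀ᵐ x ∂μ, 0 < x) {f : ℝ → ℝ} (hf : Measurable f) :
    ∫ y, f y ∂reflect μ = ∫ x, x / (∫ x, x ∂μ) * f x⁻¹ ∂μ := by
  have hmean : 0 ≤ ∫ x, x ∂μ := integral_nonneg_of_ae (hμ.mono fun _ hx => hx.le)
  rw [reflect, integral_map measurable_inv.aemeasurable hf.aestronglyMeasurable,
    integral_withDensity_eq_integral_toReal_smul (by fun_prop)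
      (ae_of_all _ fun _ => ENNReal.ofReal_lt_top)]
  refine integral_congr_ae (hμ.mono fun x hx => ?_)
  simp [ENNReal.toReal_ofReal (div_nonneg hx.le hmean)]

theorem integral_reflectNorm (hμ : ∀ᵐ x ∂μ, 0 < x) (hm : 0 < ∫ x, x ∂μ) {f : ℝ → ℝ}
    (hf : Measurable f) :
    ∫ y, f y ∂reflectNorm μ = ∫ x, x / (∫ x, x ∂μ) * f ((∫ x, x ∂μ) / x) ∂μ := by
  set m := ∫ x, x ∂μ
  have hscale : AEMeasurable (fun x : ℝ => x / m) μ := (measurable_id.div_const m).aemeasurable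
  have hpos : ∀ᵐ y ∂μ.map (· / m), 0 < y :=
    (ae_map_iff hscale measurableSet_Ioi).2 (hμ.mono fun _ hx => div_pos hx hm)
  have hmean : ∫ y, y ∂μ.map (· / m) = 1 := by
    rw [integral_map (f := fun y => y) hscale aestronglyMeasurable_id, integral_div,
      div_self hm.ne']
  rw [reflectNorm, integral_reflect hpos hf, hmean, integral_map hscale (by fun_prop)]
  simp only [div_one, inv_div]

theorem potential_reflectNorm (hμ : ∀ᵐ x ∂μ, 0 < x) (hm : 0 < ∫ x, x ∂μ) {z : ℝ} (hz : z ≠ 0) :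
    potential (reflectNorm μ) z = |z| / (∫ x, x ∂μ) * potential μ ((∫ x, x ∂μ) / z) := by
  rw [potential, integral_reflectNorm hμ hm (by fun_prop), potential, ← integral_const_mul]
  set m := ∫ x, x ∂μ
  refine integral_congr_ae (hμ.mono fun x hx => ?_)
  have hflip : x * (m / x - z) = -(z * (x - m / z)) := by field_simp; ring
  calc x / m * |m / x - z| = |x * (m / x - z)| / m := by rw [abs_mul, abs_of_pos hx]; ring
    _ = |z * (x - m / z)| / m := by rw [hflip, abs_neg]
    _ = |z| / m * |x - m / z| := by rw [abs_mul]; ring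

theorem potential_reflectNorm_zero (hμ : ∀ᵐ x ∂μ, 0 < x) (hm : 0 < ∫ x, x ∂μ) :
    potential (reflectNorm μ) 0 = μ.real univ := by
  rw [potential, integral_reflectNorm hμ hm (by fun_prop), ← mul_one (μ.real univ),
    ← smul_eq_mul, ← integral_const]
  refine integral_congr_ae (hμ.mono fun x hx => ?_)
  simp only [sub_zero, abs_of_pos (div_pos hm hx)]
  field_simp

theorem potential_zero_of_ae_pos (hμ : ∀ᵐ x ∂μ, 0 < x) : potential μ 0 = ∫ x, x ∂μ :=
  integral_congr_ae (hμ.mono fun x hx => by simp [abs_of_pos hx])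

theorem integral_id_pos_of_ae_pos [NeZero μ] (hμ : ∀ᵐ x ∂μ, 0 < x)
    (hint : Integrable (fun x => x) μ) : 0 < ∫ x, x ∂μ := by
  refine (integral_pos_iff_support_of_nonneg_ae (hμ.mono fun _ hx => hx.le) hint).2
    (pos_iff_ne_zero.2 fun h => ?_)
  obtain ⟨x, hx, hx0⟩ := (hμ.and (measure_eq_zero_iff_ae_notMem.1 h)).exists
  exact hx0 hx.ne'

end Potential

theorem setOf_potential_reflectNorm_lt_eq_preimage {μ₀ μ₁ : Measure ℝ} [IsProbabilityMeasure μ₀]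
    [IsProbabilityMeasure μ₁] (hμ₀ : ∀ᵐ x ∂μ₀, 0 < x) (hμ₁ : ∀ᵐ x ∂μ₁, 0 < x) {m : ℝ}
    (hm : 0 < m) (hm₀ : m = ∫ x, x ∂μ₀) (hm₁ : m = ∫ x, x ∂μ₁) :
    {z | potential (reflectNorm μ₀) z < potential (reflectNorm μ₁) z} =
      (m / ·) ⁻¹' {z | potential μ₀ z < potential μ₁ z} := by
  ext z
  simp only [mem_ofPred_eq, mem_preimage]
  rcases eq_or_ne z 0 with rfl | hz
  · rw [potential_reflectNorm_zero hμ₀ (hm₀ ▸ hm), potential_reflectNorm_zero hμ₁ (hm₁ ▸ hm),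
      div_zero, potential_zero_of_ae_pos hμ₀, potential_zero_of_ae_pos hμ₁, ← hm₀, ← hm₁]
    simp
  · rw [potential_reflectNorm hμ₀ (hm₀ ▸ hm) hz, potential_reflectNorm hμ₁ (hm₁ ▸ hm) hz, ← hm₀,
      ← hm₁]
    exact mul_lt_mul_iff_right₀ (by positivity)

theorem stmt6_general (μ₀ μ₁ : Measure ℝ) [IsProbabilityMeasure μ₀] [IsProbabilityMeasure μ₁]
    (hsupp₀ : μ₀ (Set.Ioi (0:ℝ))ᶜ = 0) (hsupp₁ : μ₁ (Set.Ioi (0:ℝ))ᶜ = 0)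
    (hint₀ : Integrable (fun x => x + x⁻¹) μ₀)
    (m : ℝ) (hm : m = ∫ x, x ∂μ₀) (hcommon : m = ∫ x, x ∂μ₁) :
    ∀ I : Set ℝ,
      IsConnComp I {z : ℝ | potential (reflectNorm μ₀) z < potential (reflectNorm μ₁) z}
        ↔ IsConnComp ((fun x => m / x) '' I)
            {z : ℝ | potential μ₀ z < potential μ₁ z} := by
  have hpos₀ : ∀ᵐ x ∂μ₀, 0 < x := mem_ae_iff.2 hsupp₀
  have hpos₁ : ∀ᵐ x ∂μ₁, 0 < x := mem_ae_iff.2 hsupp₁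
  have hm_pos : 0 < m := hm ▸ integral_id_pos_of_ae_pos hpos₀ (hint₀.mono' (by fun_prop)
    (hpos₀.mono fun x hx => by simp [abs_of_pos hx, hx.le]))
  have hinv : Function.Involutive fun x : ℝ => m / x := fun x => div_div_cancel₀ hm_pos.ne'
  set φ := hinv.toPerm
  set B := {z : ℝ | potential μ₀ z < potential μ₁ z}
  have hB : B ⊆ {0}ᶜ := by
    rintro z hz rfl
    simp [B, potential_zero_of_ae_pos hpos₀, potential_zero_of_ae_pos hpos₁, ← hm, ← hcommon] at hz
  have hφ_cont : ContinuousOn φ {0}ᶜ := continuousOn_const.div continuousOn_id fun _ hx => hx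
  intro I
  rw [setOf_potential_reflectNorm_lt_eq_preimage hpos₀ hpos₁ hm_pos hm hcommon]
  have hA : (m / ·) ⁻¹' B ⊆ {0}ᶜ := by rintro z hz rfl; exact hB hz (div_zero m)
  have hφA : φ '' ((m / ·) ⁻¹' B) = B := φ.image_preimage B
  conv_rhs => rw [← hφA]
  exact isConnComp_image_iff φ (hφ_cont.mono hA)
    (by rw [Function.Involutive.toPerm_symm, hφA]; exact hφ_cont.mono hB) I

/-- For Borel probability measures `μ₀, μ₁` on `(0,∞)` with `∫ (x + 1/x) dμᵢ < ∞`,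
`μ₀ ≼_cx μ₁`, common mean `m`, and `νᵢ = Id_‡ μᵢ`: `I` is a connected component of
`{U_{ν₀} < U_{ν₁}}` iff `{m/x : x ∈ I}` is a connected component of `{U_{μ₀} < U_{μ₁}}`. -/
theorem stmt6 (μ₀ μ₁ : Measure ℝ) [IsProbabilityMeasure μ₀] [IsProbabilityMeasure μ₁]
    (hsupp₀ : μ₀ (Set.Ioi (0:ℝ))ᶜ = 0) (hsupp₁ : μ₁ (Set.Ioi (0:ℝ))ᶜ = 0)
    (hint₀ : Integrable (fun x => x + x⁻¹) μ₀)
    (hint₁ : Integrable (fun x => x + x⁻¹) μ₁)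
    (hcx : ConvexOrder μ₀ μ₁)
    (m : ℝ) (hm : m = ∫ x, x ∂μ₀) (hcommon : m = ∫ x, x ∂μ₁) :
    ∀ I : Set ℝ,
      IsConnComp I {z : ℝ | potential (reflectNorm μ₀) z < potential (reflectNorm μ₁) z}
        ↔ IsConnComp ((fun x => m / x) '' I)
            {z : ℝ | potential μ₀ z < potential μ₁ z} :=
  stmt6_general μ₀ μ₁ hsupp₀ hsupp₁ hint₀ m hm hcommon
end
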